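/- Let n ≥ 2 and θ(z) = zⁿ. For a holomorphic self-map φ of 𝔻, the model space Q_θ (the polynomials of degree ≤ n−1) reduces C_φ (i.e., both Q_θ and θH²(𝔻) are C_φ-invariant) if and only if φ(z) = cz for some scalar c with |c| ≤ 1. -/

import Mathlib

open Complex Metric Filter Set

noncomputable section

/-- A holomorphic self-map of the open unit disc. -/
def SelfMapD (φ : ℂ → ℂ) : Prop :=
  DifferentiableOn ℂ φ (Metric.ball (0:ℂ) 1) ∧
  Set.MapsTo φ (Metric.ball (0:ℂ) 1) (Metric.ball (0:ℂ) 1)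

/-- Membership in the Hardy space `H²(𝔻)`. -/
def MemHardy2 (f : ℂ → ℂ) : Prop :=
  DifferentiableOn ℂ f (Metric.ball (0:ℂ) 1) ∧
  ∃ M : ℝ, ∀ r : ℝ, 0 ≤ r → r < 1 →
    (∫ t in (0:ℝ)..(2 * Real.pi),
      ‖f ((r : ℂ) * Complex.exp (t * Complex.I))‖ ^ 2) ≤ M

/-- An inner function: a bounded-by-one holomorphic function on `𝔻` whose radial
boundary values have modulus one almost everywhere. -/
def InnerFunction (θ : ℂ → ℂ) : Prop :=
  DifferentiableOn ℂ θ (Metric.ball (0:ℂ) 1) ∧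
  (∀ z ∈ Metric.ball (0:ℂ) 1, ‖θ z‖ ≤ 1) ∧
  ∀ᵐ t : ℝ, Filter.Tendsto
    (fun r : ℝ => ‖θ ((r : ℂ) * Complex.exp (t * Complex.I))‖)
    (nhdsWithin 1 (Set.Iio 1)) (nhds 1)

/-- The `n`-th Taylor coefficient of `f` at the origin. -/
def hcoef (f : ℂ → ℂ) (n : ℕ) : ℂ := iteratedDeriv n f 0 / n.factorial

/-- The `H²` inner product, via Taylor coefficients. -/
def hInner (f g : ℂ → ℂ) : ℂ := ∑' n : ℕ, hcoef f n * (starRingEnd ℂ) (hcoef g n)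

/-- The square of the `H²` norm. -/
def hNorm2 (f : ℂ → ℂ) : ℝ := ∑' n : ℕ, ‖hcoef f n‖ ^ 2

/-- Membership in the model space `Q_θ = H² ⊖ θH²`. -/
def MemModel (θ f : ℂ → ℂ) : Prop :=
  MemHardy2 f ∧ ∀ g, MemHardy2 g → hInner f (fun z => θ z * g z) = 0

/-- The model space `Q_θ` is invariant under the composition operator `C_φ`. -/
def ModelInv (θ φ : ℂ → ℂ) : Prop :=
  ∀ f, MemModel θ f → MemModel θ (fun z => f (φ z))

/-- The Beurling subspace `θH²` is invariant under the composition operator `C_φ`. -/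
def BeurlingInv (θ φ : ℂ → ℂ) : Prop :=
  ∀ f, MemHardy2 f → ∃ g, MemHardy2 g ∧
    ∀ z ∈ Metric.ball (0:ℂ) 1, θ (φ z) * f (φ z) = θ z * g z

/-- A subspace of functions is invariant under `C_φ` (as functions on the disc). -/
def SpanInvOn (Q : Submodule ℂ (ℂ → ℂ)) (φ : ℂ → ℂ) : Prop :=
  ∀ f ∈ Q, ∃ g ∈ Q, ∀ z ∈ Metric.ball (0:ℂ) 1, f (φ z) = g z

/-- The (holomorphic extension of the) quotient `(θ∘σ)/θ` lies in `H²`. -/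
def QuotInH2 (θ σ : ℂ → ℂ) : Prop :=
  ∃ g, MemHardy2 g ∧ ∀ z ∈ Metric.ball (0:ℂ) 1, θ z ≠ 0 → g z = θ (σ z) / θ z

/-- The model space spanned by `z^t/(1-ᾱz)^{t+1}`, `0 ≤ t ≤ n-1`. -/
def Qball (α : ℂ) (n : ℕ) : Submodule ℂ (ℂ → ℂ) :=
  Submodule.span ℂ
    {f : ℂ → ℂ | ∃ t : ℕ, t < n ∧ f = fun z => z ^ t / (1 - (starRingEnd ℂ) α * z) ^ (t + 1)}

/-!
If `C_φ` preserves the polynomials of degree `< n`, then `φ` and `φⁿ⁻¹` agree on the disc with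
polynomials of degree `< n`, so `(n - 1) · deg φ < n` and `φ` is affine. Invariance of `zⁿH²`,
applied to the constant `1`, gives `φ(0)ⁿ = 0`, hence `φ(z) = cz`, and `|c| ≤ 1` because `φ` maps
the disc into itself. Conversely, `z ↦ cz` multiplies each monomial by a scalar, and
`cⁿ f(cz) ∈ H²` for `f ∈ H²` because a rotation followed by a dilation `|c| ≤ 1` does not increase
the integral means of `|f|²`.
-/

open Polynomial

section Monomials

variable {R : Type*} [CommSemiring R]

theorem span_monomials_eq_map_degreeLT (n : ℕ) :
    Submodule.span R {f : R → R | ∃ i : ℕ, i < n ∧ f = fun z => z ^ i} =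
      (degreeLT R n).map (LinearMap.pi fun z => leval z) := by
  classical
  rw [degreeLT_eq_span_X_pow, Submodule.map_span]
  congr 1
  ext f
  simp [eq_comm, funext_iff]

theorem mem_span_monomials_iff {n : ℕ} {f : R → R} :
    f ∈ Submodule.span R {f : R → R | ∃ i : ℕ, i < n ∧ f = fun z => z ^ i} ↔
      ∃ P : R[X], P.degree < n ∧ ∀ z, P.eval z = f z := by
  rw [span_monomials_eq_map_degreeLT]
  simp [funext_iff, mem_degreeLT]

theorem comp_mul_mem_span_monomials {n : ℕ} (c : R) {f : R → R}
    (hf : f ∈ Submodule.span R {f : R → R | ∃ i : ℕ, i < n ∧ f = fun z => z ^ i}) :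
    (fun z => f (c * z)) ∈
      Submodule.span R {f : R → R | ∃ i : ℕ, i < n ∧ f = fun z => z ^ i} := by
  refine (Submodule.map_span_le (LinearMap.funLeft R R (c * ·)) _ _).mpr ?_
    (Submodule.mem_map_of_mem hf)
  rintro _ ⟨i, hi, rfl⟩
  have : LinearMap.funLeft R R (c * ·) (fun z => z ^ i) = c ^ i • fun z => z ^ i := by
    funext z; simp [mul_pow]
  rw [this]
  exact Submodule.smul_mem _ _ (Submodule.subset_span ⟨i, hi, rfl⟩)

end Monomials

theorem Polynomial.degree_le_one_of_degree_pow_lt {R : Type*} [Semiring R] [NoZeroDivisors R]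
    {P : R[X]} {k : ℕ} (hk : 1 ≤ k) (h : (P ^ k).degree < ↑(k + 1)) : P.degree ≤ 1 := by
  rcases eq_or_ne P 0 with rfl | hP
  · simp
  rw [← natDegree_lt_iff_degree_lt (pow_ne_zero k hP), natDegree_pow, Nat.lt_succ_iff] at h
  exact degree_le_of_natDegree_le (Nat.le_of_mul_le_mul_left (h.trans_eq (mul_one k).symm) hk)

theorem integral_norm_sq_comp_mul_circle (f : ℂ → ℂ) (c : ℂ) (r : ℝ) :
    ∫ t in (0:ℝ)..(2 * Real.pi), ‖f (c * ((r : ℂ) * exp (t * I)))‖ ^ 2 =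
      ∫ t in (0:ℝ)..(2 * Real.pi), ‖f (((‖c‖ * r : ℝ) : ℂ) * exp (t * I))‖ ^ 2 := by
  set h : ℝ → ℝ := fun t => ‖f (((‖c‖ * r : ℝ) : ℂ) * exp (t * I))‖ ^ 2
  have hper : Function.Periodic h (2 * Real.pi) := fun t => by
    simp only [h, ofReal_add, add_mul, exp_add, ofReal_mul, ofReal_ofNat, exp_two_pi_mul_I,
      mul_one]
  -- the rotation `e^{i arg c}` is absorbed by periodicity
  have hrot : ∀ t : ℝ,
      c * ((r : ℂ) * exp (t * I)) = ((‖c‖ * r : ℝ) : ℂ) * exp (↑(t + c.arg) * I) := by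
    intro t
    conv_lhs => rw [← norm_mul_exp_arg_mul_I c]
    push_cast
    rw [add_mul, exp_add]
    ring
  simp only [hrot]
  rw [intervalIntegral.integral_comp_add_right h, zero_add, add_comm,
    hper.intervalIntegral_add_eq c.arg 0, zero_add]

theorem MemHardy2.comp_mul {f : ℂ → ℂ} (hf : MemHardy2 f) {c : ℂ} (hc : ‖c‖ ≤ 1) :
    MemHardy2 (fun z => f (c * z)) := by
  obtain ⟨hd, M, hM⟩ := hf
  have hmaps : MapsTo (c * ·) (ball (0:ℂ) 1) (ball (0:ℂ) 1) := fun z hz => by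
    rw [mem_ball_zero_iff] at hz ⊢
    rw [norm_mul]
    nlinarith [norm_nonneg c, norm_nonneg z]
  refine ⟨hd.comp (differentiableOn_id.const_mul c) hmaps, M, fun r hr0 hr1 => ?_⟩
  rw [integral_norm_sq_comp_mul_circle]
  exact hM _ (by positivity) (by nlinarith [norm_nonneg c])

theorem MemHardy2.const_mul {f : ℂ → ℂ} (hf : MemHardy2 f) (a : ℂ) :
    MemHardy2 (fun z => a * f z) := by
  obtain ⟨hd, M, hM⟩ := hf
  refine ⟨hd.const_mul a, ‖a‖ ^ 2 * M, fun r hr0 hr1 => ?_⟩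
  simp only [norm_mul, mul_pow, intervalIntegral.integral_const_mul]
  exact mul_le_mul_of_nonneg_left (hM r hr0 hr1) (by positivity)

theorem memHardy2_const (a : ℂ) : MemHardy2 (fun _ => a) :=
  ⟨differentiableOn_const a, 2 * Real.pi * ‖a‖ ^ 2, fun r _ _ => by simp⟩

theorem norm_le_one_of_forall_norm_mul_lt_one {c : ℂ} (h : ∀ z ∈ ball (0:ℂ) 1, ‖c * z‖ < 1) :
    ‖c‖ ≤ 1 := by
  by_contra! hc
  have hc0 : ‖c‖ ≠ 0 := by positivity
  have := h (‖c‖⁻¹ : ℝ) <| by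
    simpa [abs_of_pos (zero_lt_one.trans hc)] using inv_lt_one_of_one_lt₀ hc
  simp [hc0] at this

theorem exists_affine_of_spanInvOn_monomials {n : ℕ} (hn : 2 ≤ n) {φ : ℂ → ℂ}
    (h : SpanInvOn (Submodule.span ℂ {f : ℂ → ℂ | ∃ i : ℕ, i < n ∧ f = fun z => z ^ i}) φ) :
    ∃ P : ℂ[X], P.degree ≤ 1 ∧ ∀ z ∈ ball (0:ℂ) 1, φ z = P.eval z := by
  have hpow : ∀ i < n, ∃ P : ℂ[X], P.degree < n ∧ ∀ z ∈ ball (0:ℂ) 1, P.eval z = φ z ^ i := by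
    intro i hi
    obtain ⟨g, hg, hφg⟩ := h _ (Submodule.subset_span ⟨i, hi, rfl⟩)
    obtain ⟨P, hP, hPg⟩ := mem_span_monomials_iff.mp hg
    exact ⟨P, hP, fun z hz => (hPg z).trans (hφg z hz).symm⟩
  obtain ⟨P, -, hP⟩ := hpow 1 (by omega)
  obtain ⟨Q, hQ, hQ'⟩ := hpow (n - 1) (by omega)
  have hPQ : P ^ (n - 1) = Q :=
    eq_of_infinite_eval_eq _ _ <| (infinite_of_mem_nhds 0 (ball_mem_nhds 0 one_pos)).mono
      fun z hz => by simp [hP z hz, hQ' z hz]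
  refine ⟨P, degree_le_one_of_degree_pow_lt (k := n - 1) (by omega) ?_,
    fun z hz => by simp [hP z hz]⟩
  rwa [hPQ, Nat.sub_add_cancel (by omega)]

theorem map_zero_eq_zero_of_beurlingInv_pow {n : ℕ} (hn : n ≠ 0) {φ : ℂ → ℂ}
    (h : BeurlingInv (fun z => z ^ n) φ) : φ 0 = 0 := by
  obtain ⟨g, -, hg⟩ := h _ (memHardy2_const 1)
  simpa [zero_pow hn, hn] using hg 0 (mem_ball_self one_pos)

/-- for `θ(z) = zⁿ`, `n ≥ 2`, the model space `Q_{zⁿ}` reduces `C_φ` iff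
`φ(z) = cz` with `|c| ≤ 1`. -/
theorem monomial_model_space_reduces_iff
    (n : ℕ) (hn : 2 ≤ n) (φ : ℂ → ℂ) (hφ : SelfMapD φ) :
    (SpanInvOn (Submodule.span ℂ {f : ℂ → ℂ | ∃ i : ℕ, i < n ∧ f = fun z => z ^ i}) φ ∧
      BeurlingInv (fun z => z ^ n) φ) ↔
      ∃ c : ℂ, ‖c‖ ≤ 1 ∧ ∀ z ∈ Metric.ball (0:ℂ) 1, φ z = c * z := by
  constructor
  · rintro ⟨hspan, hbeur⟩
    obtain ⟨P, hP, hφP⟩ := exists_affine_of_spanInvOn_monomials hn hspan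
    have hP0 : P.coeff 0 = 0 := by
      rw [coeff_zero_eq_eval_zero, ← hφP 0 (mem_ball_self one_pos)]
      exact map_zero_eq_zero_of_beurlingInv_pow (by omega) hbeur
    have hlin : ∀ z ∈ ball (0:ℂ) 1, φ z = P.coeff 1 * z := fun z hz => by
      rw [hφP z hz, eq_X_add_C_of_degree_le_one hP]
      simp [hP0]
    refine ⟨P.coeff 1, norm_le_one_of_forall_norm_mul_lt_one fun z hz => ?_, hlin⟩
    simpa [hlin z hz] using hφ.2 hz
  · rintro ⟨c, hc, hφc⟩
    refine ⟨fun f hf => ⟨_, comp_mul_mem_span_monomials c hf, fun z hz => by rw [hφc z hz]⟩,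
      fun f hf => ⟨_, (hf.comp_mul hc).const_mul (c ^ n), fun z hz => ?_⟩⟩
    simp only [hφc z hz]
    ring
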